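/- arXiv:2502.02841 — 2 statements merged into one kernel-verified Lean document; each statement's English description precedes it below -/
import Mathlib

section
/- For all integers m ≥ j ≥ 0, ∑_{k=0}^{j} e_k(−α_1, −α_2, …, −α_m) · h_{j−k}(α_1, α_2, …, α_{m−j+1}) equals 1 if j = 0 and equals 0 if j > 0. -/
/-!
Work with generating series in `R⟦X⟧`: `E_l = ∏_{x ∈ l} (1 + x X)` has coefficients `e_k(l)`
and `H_l = ∏_{x ∈ l} (1 - x X)⁻¹` has coefficients `h_k(l)`, so `E_{-l} H_l = 1`. Splitting
`α_1, …, α_m` as `A ++ B` with `A = α_1, …, α_{m-j+1}` gives `E_{-(A ++ B)} H_A = E_{-B}`;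
taking the coefficient of `X^j`, the sum equals `e_j(-B)`, which vanishes for `j > 0` because
`B` has only `j - 1` entries.
-/

variable {R : Type*} [CommRing R]

/-- Elementary symmetric polynomial `e_m` of the entries of a list (zero for `m < 0`). -/
def esymL (l : List R) (m : ℤ) : R :=
  if 0 ≤ m then
    ∑ s ∈ Finset.powersetCard m.toNat (Finset.univ : Finset (Fin l.length)), ∏ i ∈ s, l.get i
  else 0

/-- Complete homogeneous symmetric polynomial `h_m` of the entries of a list (zero for `m < 0`). -/
def hsymL (l : List R) (m : ℤ) : R :=
  if 0 ≤ m then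
    ∑ s ∈ (Finset.univ : Finset (Fin l.length)).sym m.toNat, ((s.1).map l.get).prod
  else 0

/-- The list `f a, f (a+1), …, f b` (empty if `b < a`). -/
def intList (f : ℤ → R) (a b : ℤ) : List R :=
  (List.range (b + 1 - a).toNat).map (fun p => f (a + (p : ℤ)))

/-- `e_m(f a, …, f b)`. -/
def eI (f : ℤ → R) (a b m : ℤ) : R := esymL (intList f a b) m

/-- `h_m(f a, …, f b)`. -/
def hI (f : ℤ → R) (a b m : ℤ) : R := hsymL (intList f a b) m

open PowerSeries Finset

lemma sum_Icc_eq_sum_antidiagonal {M : Type*} [AddCommMonoid M] (F : ℤ → ℤ → M) (n : ℕ) :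
    ∑ k ∈ Icc (0 : ℤ) n, F k (n - k) = ∑ p ∈ antidiagonal n, F p.1 p.2 := by
  rw [Nat.sum_antidiagonal_eq_sum_range_succ_mk, Int.Icc_eq_finset_map, sum_map]
  refine sum_congr (by simp) fun k hk => ?_
  simp [Nat.cast_sub (Nat.lt_succ_iff.1 (mem_range.1 hk))]

lemma prod_map_toMultiset_eq_prod_pow {ι M : Type*} [Fintype ι] [DecidableEq ι] [CommMonoid M]
    (f : ι →₀ ℕ) (g : ι → M) :
    (f.toMultiset.map g).prod = ∏ i, g i ^ f i := by
  rw [prod_multiset_map_count, Finsupp.toFinset_toMultiset]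
  simp only [Finsupp.count_toMultiset]
  exact Finsupp.prod_fintype _ _ (by simp)

lemma sum_finsuppAntidiag_univ_prod_pow {ι M : Type*} [Fintype ι] [DecidableEq ι]
    [CommSemiring M] (g : ι → M) (n : ℕ) :
    ∑ f ∈ finsuppAntidiag univ n, ∏ i, g i ^ f i = ∑ s ∈ univ.sym n, (s.1.map g).prod := by
  refine sum_bij' (fun f hf => ⟨Finsupp.toMultiset f, ?_⟩) (fun s _ => Multiset.toFinsupp s.1)
    ?_ ?_ ?_ ?_ ?_
  · rw [Finsupp.card_toMultiset, Finsupp.sum, ← (mem_finsuppAntidiag.1 hf).1]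
    exact sum_subset (subset_univ _) (by simp)
  · exact fun _ _ => mem_sym_iff.2 fun _ _ => mem_univ _
  · intro s _
    rw [mem_finsuppAntidiag]
    refine ⟨?_, subset_univ _⟩
    change ∑ i, s.1.count i = n
    rw [Multiset.sum_count_eq_card (fun i _ => mem_univ i)]
    exact s.2
  · intro f _
    simp
  · intro s _
    exact Sym.ext (by simp)
  · intro f _
    rw [prod_map_toMultiset_eq_prod_pow]

section intList
variable {M : Type*} (f : ℤ → M)

-- The elaborator coerces `List.range _ : List ℕ` to `List ℤ` by a `flatMap` in `intList`.
lemma intList_eq_map_range (a b : ℤ) :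
    intList f a b = (List.range (b + 1 - a).toNat).map fun p : ℕ => f (a + p) := by
  simp [intList, ← List.map_eq_flatMap]

lemma length_intList (a b : ℤ) : (intList f a b).length = (b + 1 - a).toNat := by
  simp [intList_eq_map_range]

lemma intList_neg [Neg M] (a b : ℤ) : intList (fun t => -f t) a b = (intList f a b).map (-·) := by
  simp [intList_eq_map_range]

lemma intList_append {a b c : ℤ} (hab : a ≤ b + 1) (hbc : b ≤ c) :
    intList f a b ++ intList f (b + 1) c = intList f a c := by
  obtain ⟨p, hp⟩ : ∃ p : ℕ, (c + 1 - a).toNat = (b + 1 - a).toNat + p := ⟨(c - b).toNat, by omega⟩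
  simp only [intList_eq_map_range, hp, List.range_add, List.map_append, List.map_map]
  rw [show (c + 1 - (b + 1)).toNat = p by omega]
  congr 1
  refine List.map_congr_left fun q _ => ?_
  simp only [Function.comp_apply, Nat.cast_add, Int.toNat_of_nonneg (by omega : 0 ≤ b + 1 - a)]
  ring_nf

end intList

noncomputable def esymmSeries (l : List R) : R⟦X⟧ := (l.map fun x => 1 + C x * X).prod

noncomputable def hsymmSeries (l : List R) : R⟦X⟧ := (l.map fun x => PowerSeries.mk (x ^ ·)).prod

lemma coeff_esymmSeries (l : List R) (n : ℕ) : coeff n (esymmSeries l) = esymL l n := by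
  classical
  have hprod (t : Finset (Fin l.length)) :
      ∏ i ∈ t, C l[i.1] * X = C (∏ i ∈ t, l.get i) * (X : R⟦X⟧) ^ #t := by
    simp [prod_mul_distrib, map_prod]
  rw [esymmSeries, ← Fin.prod_univ_fun_getElem, prod_one_add, map_sum]
  simp only [hprod, coeff_C_mul_X_pow, esymL, Nat.cast_nonneg, if_true, Int.toNat_natCast]
  rw [← sum_filter, powersetCard_eq_filter]
  simp only [eq_comm]

lemma coeff_hsymmSeries (l : List R) (n : ℕ) : coeff n (hsymmSeries l) = hsymL l n := by
  classical
  rw [hsymmSeries, ← Fin.prod_univ_fun_getElem, coeff_prod]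
  simp only [coeff_mk, hsymL, Nat.cast_nonneg, if_true, Int.toNat_natCast]
  exact sum_finsuppAntidiag_univ_prod_pow l.get n

lemma esymmSeries_append (l l' : List R) :
    esymmSeries (l ++ l') = esymmSeries l * esymmSeries l' := by
  simp [esymmSeries]

lemma one_sub_C_mul_X_mul_mk_pow (x : R) : (1 - C x * X) * PowerSeries.mk (x ^ ·) = 1 := by
  simpa [rescale_mk, rescale_X, mul_comm] using congrArg (rescale x) (mk_one_mul_one_sub_eq_one R)

lemma esymmSeries_map_neg_mul_hsymmSeries (l : List R) :
    esymmSeries (l.map (-·)) * hsymmSeries l = 1 := by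
  rw [esymmSeries, hsymmSeries, List.map_map, ← List.prod_map_mul]
  exact List.prod_eq_one fun _ hx => by
    obtain ⟨x, -, rfl⟩ := List.mem_map.1 hx
    simpa [sub_eq_add_neg] using one_sub_C_mul_X_mul_mk_pow x

lemma sum_antidiagonal_esymL_map_neg_append_mul_hsymL (A B : List R) (n : ℕ) :
    ∑ p ∈ antidiagonal n, esymL ((A ++ B).map (-·)) p.1 * hsymL A p.2 = esymL (B.map (-·)) n := by
  have h : esymmSeries ((A ++ B).map (-·)) * hsymmSeries A = esymmSeries (B.map (-·)) := by
    rw [List.map_append, esymmSeries_append, mul_right_comm,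
      esymmSeries_map_neg_mul_hsymmSeries, one_mul]
  simpa [coeff_mul, coeff_esymmSeries, coeff_hsymmSeries] using congrArg (coeff n) h

lemma esymL_eq_zero_of_length_lt (l : List R) {n : ℤ} (h : l.length < n) : esymL l n = 0 := by
  rw [esymL, if_pos (by omega), powersetCard_eq_empty.2 (by simp; omega), sum_empty]

/-- Corollary 2.7, second identity: for m ≥ j ≥ 0,
∑_{k=0}^{j} e_k(−α_1,…,−α_m) h_{j−k}(α_1,…,α_{m−j+1}) = δ_{j0}. -/
theorem product_cob_identity_second (α : ℤ → R) (m j : ℤ) (hj : 0 ≤ j) (hm : j ≤ m) :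
    (∑ k ∈ Finset.Icc 0 j,
      eI (fun t => -α t) 1 m k * hI α 1 (m - j + 1) (j - k))
      = if j = 0 then 1 else 0 := by
  lift j to ℕ using hj
  rw [sum_Icc_eq_sum_antidiagonal (fun k i => eI (fun t => -α t) 1 m k * hI α 1 (m - j + 1) i)]
  rcases Nat.eq_zero_or_pos j with rfl | hj0
  · simp [eI, hI, esymL, hsymL, Sym.eq_nil_of_card_zero]
  have hsplit : intList α 1 (m - j + 1) ++ intList α (m - j + 2) m = intList α 1 m := by
    simpa [add_assoc] using
      intList_append α (a := 1) (b := m - j + 1) (c := m) (by omega) (by omega)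
  simp only [eI, hI, intList_neg, ← hsplit, sum_antidiagonal_esymL_map_neg_append_mul_hsymL]
  rw [if_neg (by omega)]
  exact esymL_eq_zero_of_length_lt _ (by simp [length_intList]; omega)
end

section
/- Let k be a positive integer and let i, j be integers. Then A^{−k}_{i,t}·A^{k}_{t,j} = 0 for every integer t outside the range i − k ≤ t ≤ i, and ∑_{t=i−k}^{i} A^{−k}_{i,t} · A^{k}_{t,j} equals 1 if i = j and 0 otherwise. (This expresses that the matrices J_k^{(α)} and J_{−k}^{(α)} are mutually inverse.) -/
variable {R : Type*} [CommRing R]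

/-- The matrix entries `A^k_{ij}` of the deformed current operator `J_k^{(α)}`:
`A^k_{ij} = e_{j−i−k}(−α_{i+1},…,−α_{j−1})` if `k > 0` and `j ≥ i + k`;
`A^k_{ij} = h_{j−i−k}(α_j,…,α_i)` if `k ≤ 0` and `j ≤ i ≤ j − k`; `0` otherwise. -/
def Amat (α : ℤ → R) (k i j : ℤ) : R :=
  if 0 < k ∧ i + k ≤ j then eI (fun t => -α t) (i + 1) (j - 1) (j - i - k)
  else if k ≤ 0 ∧ j ≤ i ∧ i ≤ j - k then hI α j i (j - i - k)
  else 0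

/-! Both factors have closed forms valid for every `t`: `A^{-k}_{it} = h_{t-i+k}(α_t, …, α_i)` and
`A^k_{tj} = e_{j-t-k}(-α_{t+1}, …, -α_{j-1})`, so the vanishing outside `[i - k, i]` is a matter of
degrees. For `i < j`, peeling off the first variable with `h_m = h_m' + α_t h_{m-1}` and
`e_m = e_m' - α_t e_{m-1}'` turns the sum for `k + 1` into the sum for `k` plus a telescoping sum
whose end terms vanish; at `k = 0` the sum is `e_{j-i}` of `j - i - 1` variables, i.e. `0`. For
`j ≤ i` only `t = i - k` contributes. -/

open Finset

theorem Multiset.esymm_cons_succ {S : Type*} [CommSemiring S] (x : S) (s : Multiset S) (n : ℕ) :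
    (x ::ₘ s).esymm (n + 1) = s.esymm (n + 1) + x * s.esymm n := by
  simp only [Multiset.esymm, Multiset.powersetCard_cons, Multiset.map_add, Multiset.sum_add,
    Multiset.map_map, Function.comp_def, Multiset.prod_cons, Multiset.sum_map_mul_left]

theorem Fintype.sum_sym_option_succ {S ι : Type*} [CommSemiring S] [Fintype ι] [DecidableEq ι]
    (g : Option ι → S) (n : ℕ) :
    ∑ s : Sym (Option ι) (n + 1), ((s : Multiset (Option ι)).map g).prod =
      ∑ s : Sym ι (n + 1), ((s : Multiset ι).map (g ∘ some)).prod +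
        g none * ∑ s : Sym (Option ι) n, ((s : Multiset (Option ι)).map g).prod := by
  rw [← Equiv.sum_comp (symOptionSuccEquiv (α := ι) (n := n)).symm
      (fun s : Sym (Option ι) (n + 1) => ((s : Multiset (Option ι)).map g).prod),
    Fintype.sum_sum_type, add_comm, mul_sum]
  congr 1
  · refine Finset.sum_congr rfl fun s _ => ?_
    show (((s.map Function.Embedding.some : Sym (Option ι) (n + 1)) :
      Multiset (Option ι)).map g).prod = _
    rw [Sym.coe_map, Multiset.map_map]
    rfl
  · refine Finset.sum_congr rfl fun s _ => ?_
    show (((none ::ₛ s : Sym (Option ι) (n + 1)) : Multiset (Option ι)).map g).prod = _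
    rw [Sym.coe_cons, Multiset.map_cons, Multiset.prod_cons]

theorem Fintype.sum_sym_fin_succ {S : Type*} [CommSemiring S] {m : ℕ} (g : Fin (m + 1) → S)
    (n : ℕ) :
    ∑ s : Sym (Fin (m + 1)) (n + 1), ((s : Multiset (Fin (m + 1))).map g).prod =
      ∑ s : Sym (Fin m) (n + 1), ((s : Multiset (Fin m)).map (g ∘ Fin.succ)).prod +
        g 0 * ∑ s : Sym (Fin (m + 1)) n, ((s : Multiset (Fin (m + 1))).map g).prod := by
  have via_option : ∀ k, ∑ s : Sym (Fin (m + 1)) k, ((s : Multiset (Fin (m + 1))).map g).prod =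
      ∑ s : Sym (Option (Fin m)) k,
        ((s : Multiset (Option (Fin m))).map (g ∘ (finSuccEquiv m).symm)).prod := fun k =>
    Fintype.sum_equiv (Sym.equivCongr (finSuccEquiv m)) _ _ fun s => by
      rw [Sym.equivCongr_apply, Sym.coe_map, Multiset.map_map, Function.comp_assoc,
        Equiv.symm_comp_self]
      rfl
  rw [via_option, via_option, Fintype.sum_sym_option_succ]
  rfl

theorem Finset.sum_Icc_sub_sub_one {M : Type*} [AddCommGroup M] (f : ℤ → M) {a b : ℤ}
    (h : a - 1 ≤ b) : ∑ t ∈ Icc a b, (f t - f (t - 1)) = f b - f (a - 1) := by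
  induction b, h using Int.leInduction with
  | base => simp
  | succ b hb ih =>
    rw [← insert_Icc_sub_one_right_eq_Icc (by omega), sum_insert (by simp),
      add_sub_cancel_right, ih, sub_add_sub_cancel]

theorem intList_eq_map {α : Type*} (f : ℤ → α) (a b : ℤ) :
    intList f a b = (List.range (b + 1 - a).toNat).map fun p : ℕ => f (a + p) := by
  rw [intList, bind_pure_comp, List.map_eq_map, List.map_map]
  rfl

theorem intList_length {α : Type*} (f : ℤ → α) (a b : ℤ) :
    (intList f a b).length = (b + 1 - a).toNat := by
  simp [intList_eq_map]

theorem intList_of_lt {α : Type*} (f : ℤ → α) {a b : ℤ} (h : b < a) : intList f a b = [] := by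
  rw [intList_eq_map, Int.toNat_of_nonpos (by omega), List.range_zero, List.map_nil]

theorem intList_of_le {α : Type*} (f : ℤ → α) {a b : ℤ} (h : a ≤ b) :
    intList f a b = f a :: intList f (a + 1) b := by
  rw [intList_eq_map, intList_eq_map,
    show (b + 1 - a).toNat = (b + 1 - (a + 1)).toNat + 1 by omega, List.range_succ_eq_map]
  simp only [List.map_cons, List.map_map, Function.comp_def, Nat.cast_zero, add_zero,
    Nat.cast_succ, add_comm, add_left_comm]

section SymmetricFunctions

variable (l : List R) (x : R)

theorem esymL_natCast (n : ℕ) : esymL l n = (l : Multiset R).esymm n := by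
  rw [esymL, if_pos n.cast_nonneg, Int.toNat_natCast, ← Finset.esymm_map_val, Fin.univ_val_map,
    List.ofFn_get]

theorem esymL_of_neg {m : ℤ} (hm : m < 0) : esymL l m = 0 := if_neg hm.not_ge

theorem esymL_zero : esymL l 0 = 1 := by
  simp [esymL]

theorem esymL_of_length_lt {m : ℤ} (hm : l.length < m) : esymL l m = 0 := by
  rw [esymL, if_pos (by omega), powersetCard_eq_empty.2 (by simp; omega), sum_empty]

theorem esymL_cons (m : ℤ) : esymL (x :: l) m = esymL l m + x * esymL l (m - 1) := by
  rcases lt_trichotomy m 0 with hm | rfl | hm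
  · rw [esymL_of_neg _ hm, esymL_of_neg _ hm, esymL_of_neg _ (by omega), mul_zero, add_zero]
  · rw [esymL_zero, esymL_zero, esymL_of_neg _ (by norm_num), mul_zero, add_zero]
  · obtain ⟨n, rfl⟩ : ∃ n : ℕ, m = n + 1 := ⟨m.toNat - 1, by omega⟩
    rw [add_sub_cancel_right, ← Nat.cast_succ, esymL_natCast, esymL_natCast, esymL_natCast,
      ← Multiset.cons_coe, Multiset.esymm_cons_succ]

theorem hsymL_natCast (n : ℕ) :
    hsymL l n = ∑ s : Sym (Fin l.length) n, ((s : Multiset (Fin l.length)).map l.get).prod := by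
  rw [hsymL, if_pos n.cast_nonneg, Int.toNat_natCast, sym_univ]
  rfl

theorem hsymL_of_neg {m : ℤ} (hm : m < 0) : hsymL l m = 0 := if_neg hm.not_ge

theorem hsymL_zero : hsymL l 0 = 1 := by
  simpa [Sym.eq_nil_of_card_zero] using hsymL_natCast l 0

theorem hsymL_nil_of_pos {m : ℤ} (hm : 0 < m) : hsymL ([] : List R) m = 0 := by
  obtain ⟨n, rfl⟩ : ∃ n : ℕ, m = n + 1 := ⟨m.toNat - 1, by omega⟩
  rw [← Nat.cast_succ, hsymL_natCast]
  exact sum_of_isEmpty (ι := Sym (Fin 0) (n + 1)) _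

theorem hsymL_cons (m : ℤ) : hsymL (x :: l) m = hsymL l m + x * hsymL (x :: l) (m - 1) := by
  rcases lt_trichotomy m 0 with hm | rfl | hm
  · rw [hsymL_of_neg _ hm, hsymL_of_neg _ hm, hsymL_of_neg _ (by omega), mul_zero, add_zero]
  · rw [hsymL_zero, hsymL_zero, hsymL_of_neg _ (by norm_num), mul_zero, add_zero]
  · obtain ⟨n, rfl⟩ : ∃ n : ℕ, m = n + 1 := ⟨m.toNat - 1, by omega⟩
    rw [add_sub_cancel_right, ← Nat.cast_succ, hsymL_natCast, hsymL_natCast, hsymL_natCast]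
    exact Fintype.sum_sym_fin_succ (x :: l).get n

end SymmetricFunctions

section IntervalSymmetricFunctions

variable (f : ℤ → R) (a b : ℤ) {m : ℤ}

theorem eI_of_neg (hm : m < 0) : eI f a b m = 0 := esymL_of_neg _ hm

theorem eI_zero : eI f a b 0 = 1 := esymL_zero _

theorem eI_of_length_lt (hm : b + 1 - a < m) (hm₀ : 0 < m) : eI f a b m = 0 :=
  esymL_of_length_lt _ (by rw [intList_length]; omega)

theorem eI_eq_succ_left {a b : ℤ} (hab : a ≤ b) (m : ℤ) :
    eI f a b m = eI f (a + 1) b m + f a * eI f (a + 1) b (m - 1) := by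
  rw [eI, intList_of_le f hab, esymL_cons]
  rfl

theorem hI_of_neg (hm : m < 0) : hI f a b m = 0 := hsymL_of_neg _ hm

theorem hI_zero : hI f a b 0 = 1 := hsymL_zero _

theorem hI_of_lt {a b : ℤ} (hab : b < a) (hm : 0 < m) : hI f a b m = 0 := by
  rw [hI, intList_of_lt f hab, hsymL_nil_of_pos hm]

theorem hI_eq_succ_left {a b : ℤ} (hab : a ≤ b) (m : ℤ) :
    hI f a b m = hI f (a + 1) b m + f a * hI f a b (m - 1) := by
  rw [hI, intList_of_le f hab, hsymL_cons, ← intList_of_le f hab]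
  rfl

end IntervalSymmetricFunctions

section Orthogonality

variable (f : ℤ → R) {i j : ℤ}

theorem hI_mul_eI_succ {t : ℤ} (hti : t ≤ i) (htj : t < j) (k : ℤ) :
    hI f t i (t - i + (k + 1)) * eI (fun s => -f s) (t + 1) (j - 1) (j - t - (k + 1)) =
      hI f (t + 1) i (t - i + (k + 1)) * eI (fun s => -f s) (t + 1) (j - 1) (j - t - (k + 1)) -
        hI f t i (t - i + k) * eI (fun s => -f s) t (j - 1) (j - t - k) +
        hI f t i (t - i + k) * eI (fun s => -f s) (t + 1) (j - 1) (j - t - k) := by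
  rw [hI_eq_succ_left f hti, eI_eq_succ_left _ (by omega) (j - t - k),
    show t - i + (k + 1) - 1 = t - i + k by ring, show j - t - k - 1 = j - t - (k + 1) by ring]
  ring

theorem sum_hI_mul_eI_succ (hij : i < j) {k : ℤ} (hk : 0 ≤ k) :
    ∑ t ∈ Icc (i - (k + 1)) i,
        hI f t i (t - i + (k + 1)) * eI (fun s => -f s) (t + 1) (j - 1) (j - t - (k + 1)) =
      ∑ t ∈ Icc (i - k) i, hI f t i (t - i + k) * eI (fun s => -f s) (t + 1) (j - 1) (j - t - k) := by
  set F : ℤ → R := fun t =>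
    hI f (t + 1) i (t - i + (k + 1)) * eI (fun s => -f s) (t + 1) (j - 1) (j - t - (k + 1))
  have telescoping : ∀ t ∈ Icc (i - (k + 1)) i,
      hI f t i (t - i + (k + 1)) * eI (fun s => -f s) (t + 1) (j - 1) (j - t - (k + 1)) =
        (F t - F (t - 1)) +
          hI f t i (t - i + k) * eI (fun s => -f s) (t + 1) (j - 1) (j - t - k) := by
    intro t ht
    rw [mem_Icc] at ht
    rw [hI_mul_eI_succ f ht.2 (by omega)]
    simp only [F, sub_add_cancel, show t - 1 - i + (k + 1) = t - i + k by ring,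
      show j - (t - 1) - (k + 1) = j - t - k by ring]
  have hF_top : F i = 0 := by
    simp only [F]
    rw [hI_of_lt _ (lt_add_one i) (by omega), zero_mul]
  have hF_bot : F (i - (k + 1) - 1) = 0 := by
    simp only [F]
    rw [hI_of_neg _ _ _ (by omega), zero_mul]
  rw [sum_congr rfl telescoping, sum_add_distrib, sum_Icc_sub_sub_one F (by omega), hF_top, hF_bot,
    sub_zero, zero_add, sub_add_eq_sub_sub, ← insert_Icc_left_eq_Icc_sub_one (by omega),
    sum_insert (by simp), hI_of_neg _ _ _ (by omega), zero_mul, zero_add]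

theorem sum_hI_mul_eI_eq_zero (hij : i < j) {k : ℤ} (hk : 0 ≤ k) :
    ∑ t ∈ Icc (i - k) i, hI f t i (t - i + k) * eI (fun s => -f s) (t + 1) (j - 1) (j - t - k) =
      0 := by
  induction k, hk using Int.leInduction with
  | base =>
    rw [sub_zero, Icc_self, sum_singleton, sub_self, add_zero, sub_zero, hI_zero, one_mul,
      eI_of_length_lt _ _ _ (by omega) (by omega)]
  | succ k hk ih => rw [sum_hI_mul_eI_succ f hij hk, ih]

end Orthogonality

theorem Amat_neg_eq_hI (α : ℤ → R) {k : ℤ} (hk : 0 ≤ k) (i t : ℤ) :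
    Amat α (-k) i t = hI α t i (t - i + k) := by
  rw [Amat, if_neg (by omega)]
  split_ifs with h
  · rw [sub_neg_eq_add]
  · rcases le_or_gt t i with hti | hti
    · rw [hI_of_neg _ _ _ (by omega)]
    · rw [hI_of_lt _ hti (by omega)]

theorem Amat_eq_eI (α : ℤ → R) {k : ℤ} (hk : 0 < k) (t j : ℤ) :
    Amat α k t j = eI (fun s => -α s) (t + 1) (j - 1) (j - t - k) := by
  rw [Amat]
  split_ifs with h h'
  · rfl
  · omega
  · rw [eI_of_neg _ _ _ (by omega)]

/-- Lemma 3.3: for k > 0, the matrices J_k and J_{-k} are mutually inverse: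
A^{−k}_{i,t} · A^{k}_{t,j} vanishes unless i − k ≤ t ≤ i, and
∑_{t=i−k}^{i} A^{−k}_{i,t} A^{k}_{t,j} = δ_{ij}. -/
theorem Amat_inverse (α : ℤ → R) (k i j : ℤ) (hk : 0 < k) :
    (∀ t : ℤ, t ∉ Finset.Icc (i - k) i → Amat α (-k) i t * Amat α k t j = 0) ∧
      (∑ t ∈ Finset.Icc (i - k) i, Amat α (-k) i t * Amat α k t j)
        = if i = j then 1 else 0 := by
  simp only [Amat_neg_eq_hI α hk.le, Amat_eq_eI α hk]
  refine ⟨fun t ht => ?_, ?_⟩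
  · rw [mem_Icc, not_and_or, not_le, not_le] at ht
    rcases ht with ht | ht
    · rw [hI_of_neg _ _ _ (by omega), zero_mul]
    · rw [hI_of_lt _ ht (by omega), zero_mul]
  rcases lt_or_ge i j with hij | hji
  · rw [if_neg hij.ne, sum_hI_mul_eI_eq_zero α hij hk.le]
  rw [sum_eq_single_of_mem (i - k) (by simp; omega) fun t ht hne => ?_]
  · rw [show i - k - i + k = 0 by ring, hI_zero, one_mul, show j - (i - k) - k = j - i by ring]
    split_ifs with h
    · rw [h, sub_self, eI_zero]
    · rw [eI_of_neg _ _ _ (by omega)]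
  · rw [mem_Icc] at ht
    rw [eI_of_neg _ _ _ (by omega), mul_zero]
end
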